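/- Let Z_t = Σ_{l=1}^{L} A_l Z_{t−l} + H W_t be a vector autoregression with zero initial conditions and i.i.d. standard Gaussian W_t on ℝ^p. If HHᵀ ∈ ℝ^{d×d} is positive definite, then the matrix Σ_{t=0}^{L−1} E[Z_{t:t−L+1} Z_{t:t−L+1}ᵀ] ∈ ℝ^{dL×dL} is positive definite; in particular κ = inf{ k : det(Σ_{t=0}^{k−1} E[Z_{t:t−L+1} Z_{t:t−L+1}ᵀ]) ≠ 0 } satisfies κ ≤ L. -/

import Mathlib

open MeasureTheory ProbabilityTheory Matrix

/-- The standard Gaussian measure (mean zero, identity covariance) on `ι → ℝ`. -/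
noncomputable def stdGaussian (ι : Type*) [Fintype ι] : Measure (ι → ℝ) :=
  Measure.pi fun _ => gaussianReal 0 1

/-- The stacked state `X_t = Z_{t:t−L+1} ∈ ℝ^{dL}` (with `Z_s = 0` for `s < 0`). -/
def Xstack {d L : ℕ} {Ω : Type*} (Z : ℕ → Ω → Fin d → ℝ) (t : ℕ) (ω : Ω) :
    Fin L × Fin d → ℝ :=
  fun q => if (q.1 : ℕ) ≤ t then Z (t - (q.1 : ℕ)) ω q.2 else 0

/-- `E[Z_{t:t−L+1} Z_{t:t−L+1}ᵀ]` for the vector autoregression, the driving noise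
`W_0,…,W_{L−1}` being i.i.d. standard Gaussian on `ℝ^p`. -/
noncomputable def covXstack {d p L N : ℕ}
    (Z : ℕ → ((Fin N × Fin p) → ℝ) → Fin d → ℝ) (t : ℕ) :
    Matrix (Fin L × Fin d) (Fin L × Fin d) ℝ :=
  Matrix.of fun r c =>
    ∫ ω, Xstack Z t ω r * Xstack Z t ω c ∂(stdGaussian (Fin N × Fin p))

/-! ### Auxiliary lemmas on Gaussian moments -/

lemma integrable_id_gauss : Integrable (fun x : ℝ => x) (gaussianReal 0 1) := by
  rw [gaussianReal_of_var_ne_zero _ one_ne_zero,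
    integrable_withDensity_iff (measurable_gaussianPDF 0 1)
      (ae_of_all _ fun x => ENNReal.ofReal_lt_top)]
  have h : Integrable (fun x : ℝ => x * Real.exp (-(1/2 : ℝ) * x ^ 2)) :=
    integrable_mul_exp_neg_mul_sq (by norm_num)
  have := h.const_mul ((Real.sqrt (2 * Real.pi))⁻¹)
  refine this.congr ?_
  filter_upwards with x
  simp only [gaussianPDF, gaussianPDFReal]
  rw [ENNReal.toReal_ofReal (by positivity)]
  push_cast
  ring_nf

lemma integrable_sq_gauss : Integrable (fun x : ℝ => x ^ 2) (gaussianReal 0 1) := by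
  rw [gaussianReal_of_var_ne_zero _ one_ne_zero,
    integrable_withDensity_iff (measurable_gaussianPDF 0 1)
      (ae_of_all _ fun x => ENNReal.ofReal_lt_top)]
  have h : Integrable (fun x : ℝ => x ^ (2:ℝ) * Real.exp (-(1/2 : ℝ) * x ^ 2)) :=
    integrable_rpow_mul_exp_neg_mul_sq (by norm_num) (by norm_num)
  have := h.const_mul ((Real.sqrt (2 * Real.pi))⁻¹)
  simp only [show ∀ x:ℝ, x ^ (2:ℝ) = x ^ (2:ℕ) from fun x => by
    rw [show ((2:ℝ))=((2:ℕ):ℝ) by norm_num, Real.rpow_natCast]] at this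
  refine this.congr ?_
  filter_upwards with x
  simp only [gaussianPDF, gaussianPDFReal]
  rw [ENNReal.toReal_ofReal (by positivity)]
  push_cast
  ring_nf

lemma integral_id_gauss : ∫ x, x ∂(gaussianReal 0 1) = 0 := by
  have hmap : (gaussianReal 0 1).map (fun x => (-1 : ℝ) * x) = gaussianReal 0 1 := by
    have := gaussianReal_map_const_mul (μ := 0) (v := 1) (-1)
    simpa using this
  have h1 : ∫ x, x ∂(gaussianReal 0 1) = ∫ x, (-1 : ℝ) * x ∂(gaussianReal 0 1) := by
    conv_lhs => rw [← hmap]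
    rw [integral_map (f := fun x : ℝ => x) (φ := fun x : ℝ => -1 * x) (by fun_prop)
      (by rw [hmap]; exact measurable_id.aestronglyMeasurable)]
  have : (2:ℝ) * ∫ x, x ∂(gaussianReal 0 1) = 0 := by
    rw [integral_const_mul] at h1; linarith
  linarith

lemma integral_sq_gauss_pos : 0 < ∫ x, x ^ 2 ∂(gaussianReal 0 1) := by
  rw [integral_pos_iff_support_of_nonneg (fun x => sq_nonneg x) integrable_sq_gauss]
  have hs : (Function.support fun x : ℝ => x ^ 2) = {0}ᶜ := by
    ext x; simp [Function.support, pow_eq_zero_iff]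
  rw [hs]
  have h0 : (gaussianReal 0 1) {0} = 0 := by
    rw [gaussianReal_apply_eq_integral _ one_ne_zero]
    simp
  have : (gaussianReal 0 1) {0}ᶜ = 1 := by
    have := measure_add_measure_compl (μ := gaussianReal 0 1) (s := {0})
      (measurableSet_singleton 0)
    rw [h0, zero_add] at this; simp [this]
  rw [this]; norm_num

/-! ### Second moments of the standard Gaussian product measure -/

section Pi
variable {ι : Type*} [Fintype ι] [DecidableEq ι]

private noncomputable def gcm (i j k : ι) : ℝ → ℝ :=
  fun x => (if k = i then x else 1) * (if k = j then x else 1)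

lemma prod_gcm (i j : ι) (ω : ι → ℝ) :
    ω i * ω j = ∏ k, gcm i j k (ω k) := by
  simp only [gcm, Finset.prod_mul_distrib]
  simp [Finset.prod_ite_eq']

omit [Fintype ι] in
lemma integrable_gcm (i j k : ι) :
    Integrable (gcm i j k) (gaussianReal 0 1) := by
  unfold gcm
  by_cases hki : k = i
  · subst hki
    by_cases hkj : k = j
    · subst hkj; simpa [pow_two] using integrable_sq_gauss
    · simp only [if_pos rfl, if_neg hkj, mul_one]; exact integrable_id_gauss
  · by_cases hkj : k = j
    · subst hkj; simp only [if_neg hki, if_pos rfl, one_mul]; exact integrable_id_gauss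
    · simp only [if_neg hki, if_neg hkj, mul_one]; exact integrable_const 1

lemma integrable_coord_mul (i j : ι) :
    Integrable (fun ω : ι → ℝ => ω i * ω j) (stdGaussian ι) := by
  letI : MeasureSpace ℝ := ⟨gaussianReal 0 1⟩
  haveI : SigmaFinite (volume : Measure ℝ) :=
    inferInstanceAs (SigmaFinite (gaussianReal 0 1))
  have hvol : stdGaussian ι = (volume : Measure (ι → ℝ)) := rfl
  rw [hvol]
  have hfun : (fun ω : ι → ℝ => ω i * ω j) = fun ω => ∏ k, gcm i j k (ω k) := by
    funext ω; exact prod_gcm i j ω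
  rw [hfun]
  exact Integrable.fintype_prod fun k => integrable_gcm i j k

lemma integral_coord_mul (i j : ι) :
    ∫ ω, ω i * ω j ∂(stdGaussian ι)
      = if i = j then (∫ x, x ^ 2 ∂(gaussianReal 0 1)) else 0 := by
  letI : MeasureSpace ℝ := ⟨gaussianReal 0 1⟩
  haveI : SigmaFinite (volume : Measure ℝ) :=
    inferInstanceAs (SigmaFinite (gaussianReal 0 1))
  haveI : IsProbabilityMeasure (volume : Measure ℝ) :=
    inferInstanceAs (IsProbabilityMeasure (gaussianReal 0 1))
  have hvol : stdGaussian ι = (volume : Measure (ι → ℝ)) := rfl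
  rw [hvol]
  simp_rw [prod_gcm i j]
  rw [show (volume : Measure (ι → ℝ)) = Measure.pi (fun _ => volume) from rfl,
    MeasureTheory.integral_fintype_prod_eq_prod (gcm i j)]
  by_cases hij : i = j
  · subst hij
    rw [if_pos rfl, Finset.prod_eq_single i]
    · have : gcm i i i = fun x : ℝ => x ^ 2 := by
        funext x; simp [gcm, pow_two]
      rw [this]; rfl
    · intro k _ hk
      have : gcm i i k = fun _ : ℝ => (1:ℝ) := by funext x; simp [gcm, hk]
      rw [this]; simp
    · simp
  · rw [if_neg hij]
    refine Finset.prod_eq_zero (Finset.mem_univ i) ?_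
    have : gcm i j i = fun x : ℝ => x := by funext x; simp [gcm, hij]
    rw [this]
    exact integral_id_gauss

lemma integrable_dot (a b : ι → ℝ) :
    Integrable (fun ω : ι → ℝ => (∑ i, a i * ω i) * (∑ j, b j * ω j)) (stdGaussian ι) := by
  have hfun : (fun ω : ι → ℝ => (∑ i, a i * ω i) * (∑ j, b j * ω j))
      = fun ω => ∑ i, ∑ j, (a i * b j) * (ω i * ω j) := by
    funext ω
    rw [Finset.sum_mul_sum]
    exact Finset.sum_congr rfl fun i _ => Finset.sum_congr rfl fun j _ => by ring
  rw [hfun]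
  refine integrable_finset_sum _ fun i _ => integrable_finset_sum _ fun j _ => ?_
  exact (integrable_coord_mul i j).const_mul _

lemma integral_dot (a b : ι → ℝ) :
    ∫ ω, (∑ i, a i * ω i) * (∑ j, b j * ω j) ∂(stdGaussian ι)
      = (∫ x, x ^ 2 ∂(gaussianReal 0 1)) * ∑ i, a i * b i := by
  have hfun : (fun ω : ι → ℝ => (∑ i, a i * ω i) * (∑ j, b j * ω j))
      = fun ω => ∑ i, ∑ j, (a i * b j) * (ω i * ω j) := by
    funext ω
    rw [Finset.sum_mul_sum]
    exact Finset.sum_congr rfl fun i _ => Finset.sum_congr rfl fun j _ => by ring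
  rw [hfun]
  rw [integral_finset_sum _ fun i _ =>
    integrable_finset_sum _ fun j _ => (integrable_coord_mul i j).const_mul _]
  have : ∀ i, ∫ ω, ∑ j, (a i * b j) * (ω i * ω j) ∂(stdGaussian ι)
      = a i * b i * (∫ x, x ^ 2 ∂(gaussianReal 0 1)) := by
    intro i
    rw [integral_finset_sum _ fun j _ => (integrable_coord_mul i j).const_mul _]
    have h1 : ∀ j, ∫ ω, (a i * b j) * (ω i * ω j) ∂(stdGaussian ι)
        = if i = j then a i * b j * (∫ x, x ^ 2 ∂(gaussianReal 0 1)) else 0 := by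
      intro j
      rw [integral_const_mul, integral_coord_mul i j]
      by_cases h : i = j <;> simp [h]
    simp_rw [h1]
    simp
  simp_rw [this]
  rw [Finset.mul_sum]
  exact Finset.sum_congr rfl fun i _ => by ring
end Pi

/-! ### Linear-algebra helpers -/

lemma sum_mulVec' {n m κ : Type*} [Fintype m] (s : Finset κ)
    (M : κ → Matrix n m ℝ) (v : m → ℝ) :
    (∑ k ∈ s, M k) *ᵥ v = ∑ k ∈ s, M k *ᵥ v := by
  funext i
  simp only [Matrix.mulVec, dotProduct, Finset.sum_apply, Matrix.sum_apply,
    Finset.sum_mul]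
  exact Finset.sum_comm

lemma dotProduct_sum' {n κ : Type*} [Fintype n] (s : Finset κ)
    (v : n → ℝ) (f : κ → n → ℝ) :
    v ⬝ᵥ (∑ k ∈ s, f k) = ∑ k ∈ s, v ⬝ᵥ f k := by
  simp only [dotProduct, Finset.sum_apply, Finset.mul_sum]
  exact Finset.sum_comm

/-! ### Linear representation of the VAR process -/

lemma var_linear {d p L : ℕ} (Ac : Fin L → Matrix (Fin d) (Fin d) ℝ)
    (H : Matrix (Fin d) (Fin p) ℝ)
    (Z : ℕ → ((Fin L × Fin p) → ℝ) → Fin d → ℝ)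
    (hZ : ∀ ω, ∀ t : Fin L,
      Z (t : ℕ) ω
        = (∑ l : Fin L,
            if (l : ℕ) + 1 ≤ (t : ℕ) then (Ac l) *ᵥ (Z ((t : ℕ) - ((l : ℕ) + 1)) ω) else 0)
          + H *ᵥ (fun i => ω (t, i))) :
    ∀ t : ℕ, t < L → ∃ C : Matrix (Fin d) (Fin L × Fin p) ℝ, ∀ ω, Z t ω = C *ᵥ ω := by
  intro t
  induction t using Nat.strong_induction_on with
  | _ t IH =>
    intro ht
    choose C hC using IH
    classical
    refine ⟨(∑ l : Fin L,
        if h : (l : ℕ) + 1 ≤ t then Ac l * C (t - ((l : ℕ) + 1)) (by omega) (by omega) else 0)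
      + Matrix.of (fun (jj : Fin d) (q : Fin L × Fin p) =>
          if q.1 = (⟨t, ht⟩ : Fin L) then H jj q.2 else 0), ?_⟩
    intro ω
    have h0 := hZ ω ⟨t, ht⟩
    rw [show ((⟨t, ht⟩ : Fin L) : ℕ) = t from rfl] at h0
    rw [h0, Matrix.add_mulVec, sum_mulVec']
    congr 1
    · refine Finset.sum_congr rfl fun l _ => ?_
      by_cases h : (l : ℕ) + 1 ≤ t
      · rw [dif_pos h, if_pos h, ← Matrix.mulVec_mulVec, ← hC _ (by omega) (by omega) ω]
      · rw [dif_neg h, if_neg h, Matrix.zero_mulVec]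
    · funext jj
      simp only [Matrix.mulVec, dotProduct, Matrix.of_apply]
      rw [Fintype.sum_prod_type]
      symm
      rw [Finset.sum_eq_single (⟨t, ht⟩ : Fin L) (fun b _ hb => by simp [hb])
        (fun hb => absurd (Finset.mem_univ _) hb)]
      simp

/-- For the vector autoregression `Z_t = Σ_{l=1}^L A_l Z_{t−l} + H W_t`
with zero initial conditions and i.i.d. standard Gaussian `W_t`, if `HHᵀ` is positive
definite then `Σ_{t=0}^{L−1} E[Z_{t:t−L+1} Z_{t:t−L+1}ᵀ]` is positive definite; in
particular `κ = inf{k : det(Σ_{t<k} E[Z_{t:t−L+1} Z_{t:t−L+1}ᵀ]) ≤ L`. -/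
theorem var_excitation_kappa_le_L
    (d p L : ℕ) (hd : 0 < d) (hp : 0 < p) (hL : 0 < L)
    (Ac : Fin L → Matrix (Fin d) (Fin d) ℝ) (H : Matrix (Fin d) (Fin p) ℝ)
    (Z : ℕ → ((Fin L × Fin p) → ℝ) → Fin d → ℝ)
    (hZ : ∀ ω, ∀ t : Fin L,
      Z (t : ℕ) ω
        = (∑ l : Fin L,
            if (l : ℕ) + 1 ≤ (t : ℕ) then (Ac l) *ᵥ (Z ((t : ℕ) - ((l : ℕ) + 1)) ω) else 0)
          + H *ᵥ (fun i => ω (t, i)))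
    (hH : (H * Hᵀ).PosDef) :
    (∑ t ∈ Finset.range L, covXstack (p := p) (L := L) Z t).PosDef ∧
      sInf {k : ℕ |
        (∑ t ∈ Finset.range k, covXstack (p := p) (L := L) Z t).det ≠ 0} ≤ L := by
  classical
  choose C hC using var_linear Ac H Z hZ
  set m2 := ∫ x, x ^ 2 ∂(gaussianReal 0 1) with hm2
  have hm2pos : 0 < m2 := integral_sq_gauss_pos
  -- the stacked state is linear in the noise
  set D : ∀ t : ℕ, t < L → Matrix (Fin L × Fin d) (Fin L × Fin p) ℝ :=
    fun t ht => Matrix.of (fun q u =>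
      if h : (q.1 : ℕ) ≤ t then C (t - (q.1 : ℕ)) (by omega) q.2 u else 0) with hD
  have hX : ∀ t (ht : t < L) ω q, Xstack Z t ω q = ∑ u, D t ht q u * ω u := by
    intro t ht ω q
    by_cases h : (q.1 : ℕ) ≤ t
    · simp only [Xstack, if_pos h, hD, Matrix.of_apply, dif_pos h]
      rw [hC (t - (q.1 : ℕ)) (by omega) ω]
      rfl
    · simp [Xstack, if_neg h, hD, dif_neg h]
  have hcov : ∀ t (ht : t < L), covXstack (p := p) (L := L) Z t
      = m2 • (D t ht * (D t ht)ᵀ) := by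
    intro t ht
    ext r c
    show (∫ ω, Xstack Z t ω r * Xstack Z t ω c ∂(stdGaussian (Fin L × Fin p))) = _
    have : (fun ω : (Fin L × Fin p) → ℝ => Xstack Z t ω r * Xstack Z t ω c)
        = fun ω => (∑ u, D t ht r u * ω u) * (∑ u, D t ht c u * ω u) := by
      funext ω; rw [hX t ht ω r, hX t ht ω c]
    rw [this, integral_dot]
    simp [Matrix.mul_apply, Matrix.smul_apply, Matrix.transpose_apply, smul_eq_mul, hm2]
  -- the quadratic form of each summand
  have hterm : ∀ (v : Fin L × Fin d → ℝ) t (ht : t < L),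
      v ⬝ᵥ (covXstack (p := p) (L := L) Z t *ᵥ v)
        = m2 * (((D t ht)ᵀ *ᵥ v) ⬝ᵥ ((D t ht)ᵀ *ᵥ v)) := by
    intro v t ht
    rw [hcov t ht, Matrix.smul_mulVec, dotProduct_smul, ← Matrix.mulVec_mulVec,
      Matrix.dotProduct_mulVec, ← Matrix.transpose_transpose (D t ht),
      Matrix.vecMul_transpose, Matrix.transpose_transpose]
    rfl
  -- the quadratic form of the sum, evaluated against v, is positive for v ≠ 0
  have hquadpos : ∀ v : Fin L × Fin d → ℝ, v ≠ 0 →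
      0 < v ⬝ᵥ ((∑ t ∈ Finset.range L, covXstack (p := p) (L := L) Z t) *ᵥ v) := by
    intro v hv
    rw [sum_mulVec', dotProduct_sum']
    -- find the first block where v is nonzero
    obtain ⟨q₀, hq₀⟩ := Function.ne_iff.mp hv
    set T : Finset (Fin L) := Finset.univ.filter (fun l => ∃ j, v (l, j) ≠ 0) with hT
    rw [Pi.zero_apply] at hq₀
    have hTne : T.Nonempty := by
      refine ⟨q₀.1, ?_⟩
      simp only [hT, Finset.mem_filter, Finset.mem_univ, true_and]
      exact ⟨q₀.2, hq₀⟩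
    set l₀ := T.min' hTne with hl₀
    obtain ⟨j₀, hj₀⟩ : ∃ j, v (l₀, j) ≠ 0 := by
      have := T.min'_mem hTne
      simpa [hT] using this
    have hzero : ∀ l : Fin L, l < l₀ → ∀ j, v (l, j) = 0 := by
      intro l hl j
      by_contra hne
      have hmem : l ∈ T := by
        simp only [hT, Finset.mem_filter, Finset.mem_univ, true_and]
        exact ⟨j, hne⟩
      exact absurd (T.min'_le l hmem) (not_le.mpr hl)
    have ht₀ : (l₀ : ℕ) < L := l₀.isLt
    -- the positive term
    have hpos : 0 < v ⬝ᵥ (covXstack (p := p) (L := L) Z (l₀ : ℕ) *ᵥ v) := by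
      rw [hterm v (l₀ : ℕ) ht₀]
      set w := (D (l₀ : ℕ) ht₀)ᵀ *ᵥ v with hw
      -- w is nonzero: pair it against a suitable ω
      have hvl : (fun j => v (l₀, j)) ≠ 0 := by
        intro h0
        exact hj₀ (congrFun h0 j₀)
      have hHpos := hH.dotProduct_mulVec_pos (x := fun j => v (l₀, j)) hvl
      rw [show star (fun j => v (l₀, j)) = fun j => v (l₀, j) from funext fun j => star_trivial _]
        at hHpos
      have hcc : (fun j => v (l₀, j)) ⬝ᵥ ((H * Hᵀ) *ᵥ fun j => v (l₀, j))
          = (Hᵀ *ᵥ fun j => v (l₀, j)) ⬝ᵥ (Hᵀ *ᵥ fun j => v (l₀, j)) := by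
        rw [← Matrix.mulVec_mulVec, Matrix.dotProduct_mulVec,
          ← Matrix.transpose_transpose H, Matrix.vecMul_transpose, Matrix.transpose_transpose]
      set c : Fin p → ℝ := Hᵀ *ᵥ fun j => v (l₀, j) with hc
      have hcne : c ≠ 0 := by
        intro h0
        rw [hcc, h0] at hHpos
        simp at hHpos
      obtain ⟨i₀, hi₀⟩ := Function.ne_iff.mp hcne
      rw [Pi.zero_apply] at hi₀
      -- evaluate w against the indicator of the coordinate ((0 : Fin L), i₀)
      set ω₀ : (Fin L × Fin p) → ℝ :=
        fun u => if u = ((⟨0, hL⟩ : Fin L), i₀) then 1 else 0 with hω₀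
      have hwdot : w ⬝ᵥ ω₀ = ∑ q, v q * Xstack Z (l₀ : ℕ) ω₀ q := by
        rw [hw, dotProduct_comm ((D (↑l₀) ht₀)ᵀ *ᵥ v) ω₀, Matrix.dotProduct_mulVec,
          Matrix.vecMul_transpose, dotProduct_comm (D (↑l₀) ht₀ *ᵥ ω₀) v]
        simp only [dotProduct]
        refine Finset.sum_congr rfl fun q _ => ?_
        rw [hX (l₀ : ℕ) ht₀ ω₀ q]
        rfl
      have hZ0 : Z 0 ω₀ = H *ᵥ (fun i => ω₀ ((⟨0, hL⟩ : Fin L), i)) := by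
        have h0 := hZ ω₀ ⟨0, hL⟩
        rw [show ((⟨0, hL⟩ : Fin L) : ℕ) = 0 from rfl] at h0
        rw [h0]
        have : (∑ l : Fin L, if (l : ℕ) + 1 ≤ 0 then
            (Ac l) *ᵥ (Z (0 - ((l : ℕ) + 1)) ω₀) else 0) = 0 :=
          Finset.sum_eq_zero fun l _ => by rw [if_neg (by omega)]
        rw [this, zero_add]
      have hXval : ∑ q, v q * Xstack Z (l₀ : ℕ) ω₀ q = c i₀ := by
        rw [Fintype.sum_prod_type]
        rw [Finset.sum_eq_single l₀ (fun b _ hb => ?_) (fun hb => absurd (Finset.mem_univ _) hb)]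
        · -- the l₀ term
          simp only [Xstack, if_pos (le_refl (l₀ : ℕ)), Nat.sub_self]
          rw [hZ0]
          have : ∀ j, (H *ᵥ fun i => ω₀ ((⟨0, hL⟩ : Fin L), i)) j = H j i₀ := by
            intro j
            simp only [Matrix.mulVec, dotProduct, hω₀, Prod.mk.injEq, eq_self_iff_true,
              true_and]
            rw [Finset.sum_eq_single i₀ (fun b _ hb => by simp [hb]) (fun hb =>
              absurd (Finset.mem_univ _) hb)]
            simp
          simp_rw [this]
          rw [hc]
          simp only [Matrix.mulVec, dotProduct, Matrix.transpose_apply]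
          exact Finset.sum_congr rfl fun j _ => by ring
        · -- other blocks contribute zero
          rcases lt_or_gt_of_ne hb with hlt | hgt
          · exact Finset.sum_eq_zero fun j _ => by rw [hzero b hlt j, zero_mul]
          · refine Finset.sum_eq_zero fun j _ => ?_
            have : ¬ ((b : ℕ) ≤ (l₀ : ℕ)) := by exact_mod_cast not_le.mpr hgt
            simp [Xstack, this]
      have hwne : w ≠ 0 := by
        intro h0
        rw [h0, zero_dotProduct] at hwdot
        rw [hXval] at hwdot
        exact hi₀ hwdot.symm
      obtain ⟨u₀, hu₀⟩ := Function.ne_iff.mp hwne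
      have : 0 < w ⬝ᵥ w := by
        refine Finset.sum_pos' (fun u _ => mul_self_nonneg _) ⟨u₀, Finset.mem_univ _, ?_⟩
        exact mul_self_pos.mpr hu₀
      positivity
    refine Finset.sum_pos' (fun t htmem => ?_) ⟨(l₀ : ℕ), Finset.mem_range.mpr ht₀, hpos⟩
    have ht : t < L := Finset.mem_range.mp htmem
    rw [hterm v t ht]
    have : 0 ≤ ((D t ht)ᵀ *ᵥ v) ⬝ᵥ ((D t ht)ᵀ *ᵥ v) :=
      Finset.sum_nonneg fun u _ => mul_self_nonneg _
    positivity
  have hherm : (∑ t ∈ Finset.range L, covXstack (p := p) (L := L) Z t).IsHermitian := by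
    rw [Matrix.IsHermitian, Matrix.conjTranspose_sum]
    refine Finset.sum_congr rfl fun t htmem => ?_
    have ht : t < L := Finset.mem_range.mp htmem
    rw [hcov t ht]
    ext r c
    simp only [Matrix.conjTranspose_apply, Matrix.smul_apply, Matrix.mul_apply,
      Matrix.transpose_apply, smul_eq_mul, star_trivial]
    rw [Finset.mul_sum, Finset.mul_sum]
    exact Finset.sum_congr rfl fun u _ => by ring
  have hPD : (∑ t ∈ Finset.range L, covXstack (p := p) (L := L) Z t).PosDef := by
    refine Matrix.PosDef.of_dotProduct_mulVec_pos hherm fun v hv => ?_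
    rw [show star v = v from funext fun q => star_trivial _]
    exact hquadpos v hv
  refine ⟨hPD, ?_⟩
  exact Nat.sInf_le (by simpa using hPD.det_pos.ne')
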